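/- For all c ∈ ℤ and t, p ∈ ℕ with 0 ≤ p ≤ t, one has q^{−pt}·[K,K̃;c;t] = Σ_{j=0}^{p} [K,K̃;c−p;t−j] · [p choose j]_q · K̃^{−j} · q^{−cj} in D_q. In particular, for integers c, t with 0 ≤ c ≤ t, [K,K̃;c;t] = Σ_{j=0}^{c} [K,K̃;t−j] · [c choose j]_q · K̃^{−j} · q^{c(t−j)}. -/

import Mathlib

noncomputable section

/-- Generators of the quantum double `D_q`. -/
inductive DGen : Type
  | E | F | K | Kinv | Kt | Ktinv
  deriving DecidableEq

/-- The defining relations of `D_q`. -/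
inductive DRel (k : Type) [Field k] (q : k) :
    FreeAlgebra k DGen → FreeAlgebra k DGen → Prop
  | KE : DRel k q (FreeAlgebra.ι k DGen.K * FreeAlgebra.ι k DGen.E)
      ((q ^ 2) • (FreeAlgebra.ι k DGen.E * FreeAlgebra.ι k DGen.K))
  | KF : DRel k q (FreeAlgebra.ι k DGen.K * FreeAlgebra.ι k DGen.F)
      (((q ^ 2)⁻¹) • (FreeAlgebra.ι k DGen.F * FreeAlgebra.ι k DGen.K))
  | KtE : DRel k q (FreeAlgebra.ι k DGen.Kt * FreeAlgebra.ι k DGen.E)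
      ((q ^ 2) • (FreeAlgebra.ι k DGen.E * FreeAlgebra.ι k DGen.Kt))
  | KtF : DRel k q (FreeAlgebra.ι k DGen.Kt * FreeAlgebra.ι k DGen.F)
      (((q ^ 2)⁻¹) • (FreeAlgebra.ι k DGen.F * FreeAlgebra.ι k DGen.Kt))
  | KKinv : DRel k q (FreeAlgebra.ι k DGen.K * FreeAlgebra.ι k DGen.Kinv) 1
  | KinvK : DRel k q (FreeAlgebra.ι k DGen.Kinv * FreeAlgebra.ι k DGen.K) 1
  | KtKtinv : DRel k q (FreeAlgebra.ι k DGen.Kt * FreeAlgebra.ι k DGen.Ktinv) 1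
  | KtinvKt : DRel k q (FreeAlgebra.ι k DGen.Ktinv * FreeAlgebra.ι k DGen.Kt) 1
  | KKt : DRel k q (FreeAlgebra.ι k DGen.K * FreeAlgebra.ι k DGen.Kt)
      (FreeAlgebra.ι k DGen.Kt * FreeAlgebra.ι k DGen.K)
  | EF : DRel k q (FreeAlgebra.ι k DGen.E * FreeAlgebra.ι k DGen.F)
      (FreeAlgebra.ι k DGen.F * FreeAlgebra.ι k DGen.E +
        ((q - q⁻¹)⁻¹) • (FreeAlgebra.ι k DGen.K - FreeAlgebra.ι k DGen.Ktinv))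

/-- The quantum double `D_q` of `U_q(sl2)^{≤0}`, presented by generators and relations. -/
abbrev Dq (k : Type) [Field k] (q : k) := RingQuot (DRel k q)

def DE (k : Type) [Field k] (q : k) : Dq k q :=
  RingQuot.mkAlgHom k (DRel k q) (FreeAlgebra.ι k DGen.E)
def DF (k : Type) [Field k] (q : k) : Dq k q :=
  RingQuot.mkAlgHom k (DRel k q) (FreeAlgebra.ι k DGen.F)
def DK (k : Type) [Field k] (q : k) : Dq k q :=
  RingQuot.mkAlgHom k (DRel k q) (FreeAlgebra.ι k DGen.K)
def DKinv (k : Type) [Field k] (q : k) : Dq k q :=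
  RingQuot.mkAlgHom k (DRel k q) (FreeAlgebra.ι k DGen.Kinv)
def DKt (k : Type) [Field k] (q : k) : Dq k q :=
  RingQuot.mkAlgHom k (DRel k q) (FreeAlgebra.ι k DGen.Kt)
def DKtinv (k : Type) [Field k] (q : k) : Dq k q :=
  RingQuot.mkAlgHom k (DRel k q) (FreeAlgebra.ι k DGen.Ktinv)

/-- The quantum integer `[n]_q = (qⁿ - q⁻ⁿ)/(q - q⁻¹)`. -/
def qint (k : Type) [Field k] (q : k) (n : ℕ) : k := (q ^ n - q⁻¹ ^ n) / (q - q⁻¹)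

/-- The quantum factorial `[n]_q!`. -/
def qfact (k : Type) [Field k] (q : k) : ℕ → k
  | 0 => 1
  | n + 1 => qfact k q n * qint k q (n + 1)

/-- The Gaussian binomial coefficient `[m choose n]_q`. -/
def qbinom (k : Type) [Field k] (q : k) (m n : ℕ) : k :=
  qfact k q m / (qfact k q n * qfact k q (m - n))

/-- The element `[K,K̃;c;t] = ∏_{s=1}^t (K q^{c-s+1} - K̃⁻¹ q^{-c+s-1})/(q^s - q^{-s})` of `D_q`. -/
def KKtc (k : Type) [Field k] (q : k) (c : ℤ) : ℕ → Dq k q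
  | 0 => 1
  | t + 1 =>
      KKtc k q c t *
        ((q ^ ((t : ℤ) + 1) - q ^ (-((t : ℤ) + 1)))⁻¹ •
          (q ^ (c - (t : ℤ)) • DK k q - q ^ ((t : ℤ) - c) • DKtinv k q))

/-!
Peeling off the first factor of `[K,K̃;c;t+1]` instead of the last one, and using only that `K`
and `K̃⁻¹` commute, gives the case `p = 1`:
`q^{-(t+1)} [K,K̃;c;t+1] = [K,K̃;c-1;t+1] + q^{-c} [K,K̃;c-1;t] K̃⁻¹`.
Iterating it `p` times, the coefficients of neighbouring terms combine by the symmetric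
`q`-Pascal rule `[p+1 choose m+1] = q^{-(m+1)} [p choose m+1] + q^{p-m} [p choose m]`.
The second identity is the case `p = c`, multiplied by `q^{ct}`.
-/

lemma Finset.sum_range_succ_add_shift {M : Type*} [AddCommMonoid M] (f g : ℕ → M) (p : ℕ) :
    ∑ j ∈ Finset.range (p + 1), (f j + g j) =
      ∑ i ∈ Finset.range p, (f (i + 1) + g i) + f 0 + g p := by
  rw [Finset.sum_add_distrib, Finset.sum_add_distrib, Finset.sum_range_succ' f,
    Finset.sum_range_succ g]
  abel

section

variable {k : Type} [Field k] {q : k}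

section QNumbers

lemma pow_sub_inv_pow_ne_zero (hq0 : q ≠ 0) (hq : ∀ n : ℕ, 0 < n → q ^ n ≠ 1) {n : ℕ}
    (hn : 0 < n) : q ^ n - q⁻¹ ^ n ≠ 0 := by
  intro h
  refine hq (2 * n) (by omega) ?_
  rw [two_mul, pow_add, ← mul_inv_cancel₀ (pow_ne_zero n hq0), ← inv_pow,
    ← sub_eq_zero.mp h]

lemma zpow_sub_zpow_neg_ne_zero (hq0 : q ≠ 0) (hq : ∀ n : ℕ, 0 < n → q ^ n ≠ 1) {n : ℕ}
    (hn : 0 < n) : q ^ (n : ℤ) - q ^ (-(n : ℤ)) ≠ 0 := by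
  rw [zpow_neg, zpow_natCast, ← inv_pow]
  exact pow_sub_inv_pow_ne_zero hq0 hq hn

lemma qint_ne_zero (hq0 : q ≠ 0) (hq : ∀ n : ℕ, 0 < n → q ^ n ≠ 1) {n : ℕ} (hn : 0 < n) :
    qint k q n ≠ 0 :=
  div_ne_zero (pow_sub_inv_pow_ne_zero hq0 hq hn)
    (by simpa using pow_sub_inv_pow_ne_zero hq0 hq one_pos)

lemma qfact_ne_zero (hq0 : q ≠ 0) (hq : ∀ n : ℕ, 0 < n → q ^ n ≠ 1) (n : ℕ) :
    qfact k q n ≠ 0 := by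
  induction n with
  | zero => exact one_ne_zero
  | succ n ih => exact mul_ne_zero ih (qint_ne_zero hq0 hq n.succ_pos)

lemma qbinom_zero_right (hq0 : q ≠ 0) (hq : ∀ n : ℕ, 0 < n → q ^ n ≠ 1) (n : ℕ) :
    qbinom k q n 0 = 1 := by
  rw [qbinom, Nat.sub_zero, qfact, one_mul, div_self (qfact_ne_zero hq0 hq n)]

lemma qbinom_self (hq0 : q ≠ 0) (hq : ∀ n : ℕ, 0 < n → q ^ n ≠ 1) (n : ℕ) :
    qbinom k q n n = 1 := by
  rw [qbinom, Nat.sub_self, qfact, mul_one, div_self (qfact_ne_zero hq0 hq n)]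

lemma qint_add (a b : ℕ) : qint k q (a + b) = q⁻¹ ^ a * qint k q b + q ^ b * qint k q a := by
  simp only [qint, mul_div_assoc', ← add_div]
  ring

lemma qbinom_succ_succ (hq0 : q ≠ 0) (hq : ∀ n : ℕ, 0 < n → q ^ n ≠ 1) {p m : ℕ}
    (h : m < p) :
    qbinom k q (p + 1) (m + 1) =
      q ^ (-((m : ℤ) + 1)) * qbinom k q p (m + 1) + q ^ ((p : ℤ) - m) * qbinom k q p m := by
  obtain ⟨b, rfl⟩ : ∃ b, p = m + 1 + b := ⟨p - (m + 1), by omega⟩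
  have hsucc : qint k q (m + 1 + b + 1) =
      q⁻¹ ^ (m + 1) * qint k q (b + 1) + q ^ (b + 1) * qint k q (m + 1) := by
    rw [add_assoc, qint_add]
  have e₁ : q ^ (-((m : ℤ) + 1)) = q⁻¹ ^ (m + 1) := by
    rw [zpow_neg, ← inv_zpow, ← Nat.cast_succ, zpow_natCast]
  have e₂ : q ^ (((m + 1 + b : ℕ) : ℤ) - m) = q ^ (b + 1) := by
    rw [← zpow_natCast]; congr 1; push_cast; ring
  rw [e₁, e₂]
  simp only [qbinom, show m + 1 + b + 1 - (m + 1) = b + 1 by omega,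
    show m + 1 + b - (m + 1) = b by omega, show m + 1 + b - m = b + 1 by omega, qfact, hsucc]
  have := qfact_ne_zero hq0 hq
  have := qint_ne_zero hq0 hq (m.succ_pos)
  have := qint_ne_zero hq0 hq (b.succ_pos)
  field_simp

end QNumbers

section Dq

variable (k q)

lemma DKt_mul_DKtinv : DKt k q * DKtinv k q = 1 := by
  simpa [DKt, DKtinv] using RingQuot.mkAlgHom_rel k (DRel.KtKtinv (k := k) (q := q))

lemma DKtinv_mul_DKt : DKtinv k q * DKt k q = 1 := by
  simpa [DKt, DKtinv] using RingQuot.mkAlgHom_rel k (DRel.KtinvKt (k := k) (q := q))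

lemma commute_DK_DKt : Commute (DK k q) (DKt k q) := by
  simpa [Commute, SemiconjBy, DK, DKt] using
    RingQuot.mkAlgHom_rel k (DRel.KKt (k := k) (q := q))

lemma commute_DK_DKtinv : Commute (DK k q) (DKtinv k q) :=
  (commute_DK_DKt k q).units_inv_right (u := ⟨_, _, DKt_mul_DKtinv k q, DKtinv_mul_DKt k q⟩)

variable {k q}

lemma Commute.KKtc_right {x : Dq k q} (hK : Commute x (DK k q))
    (hKtinv : Commute x (DKtinv k q)) (c : ℤ) (t : ℕ) : Commute x (KKtc k q c t) := by
  induction t with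
  | zero => exact Commute.one_right x
  | succ t ih =>
    exact ih.mul_right (((hK.smul_right _).sub_right (hKtinv.smul_right _)).smul_right _)

lemma KKtc_succ' (c : ℤ) (t : ℕ) :
    KKtc k q c (t + 1) =
      (q ^ ((t : ℤ) + 1) - q ^ (-((t : ℤ) + 1)))⁻¹ •
        ((q ^ c • DK k q - q ^ (-c) • DKtinv k q) * KKtc k q (c - 1) t) := by
  induction t with
  | zero => simp [KKtc]
  | succ t ih =>
    rw [KKtc, ih, KKtc, show c - ((t + 1 : ℕ) : ℤ) = c - 1 - t by push_cast; ring,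
      show ((t + 1 : ℕ) : ℤ) - c = t - (c - 1) by push_cast; ring]
    simp only [smul_mul_assoc, mul_smul_comm, smul_smul, mul_assoc]

end Dq

lemma KKtc_reduction_one (hq0 : q ≠ 0) (hq : ∀ n : ℕ, 0 < n → q ^ n ≠ 1) (c : ℤ) (t : ℕ) :
    q ^ (-((t : ℤ) + 1)) • KKtc k q c (t + 1) =
      KKtc k q (c - 1) (t + 1) + q ^ (-c) • (KKtc k q (c - 1) t * DKtinv k q) := by
  have hd : q ^ ((t : ℤ) + 1) - q ^ (-((t : ℤ) + 1)) ≠ 0 := by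
    exact_mod_cast zpow_sub_zpow_neg_ne_zero hq0 hq t.succ_pos
  set d := q ^ ((t : ℤ) + 1) - q ^ (-((t : ℤ) + 1))
  have hfactor : q ^ (-((t : ℤ) + 1)) • (q ^ c • DK k q - q ^ (-c) • DKtinv k q) =
      (q ^ (c - 1 - t) • DK k q - q ^ (t - (c - 1)) • DKtinv k q) +
        (q ^ (-c) * d) • DKtinv k q := by
    match_scalars <;> simp only [d, mul_one, mul_neg, mul_sub, ← zpow_add₀ hq0] <;> ring_nf
  have hcomm : Commute (q ^ c • DK k q - q ^ (-c) • DKtinv k q) (KKtc k q (c - 1) t) :=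
    Commute.KKtc_right (((Commute.refl _).smul_left _).sub_left
        ((commute_DK_DKtinv k q).symm.smul_left _))
      (((commute_DK_DKtinv k q).smul_left _).sub_left ((Commute.refl _).smul_left _)) _ _
  calc q ^ (-((t : ℤ) + 1)) • KKtc k q c (t + 1)
      = KKtc k q (c - 1) t *
          (d⁻¹ • q ^ (-((t : ℤ) + 1)) • (q ^ c • DK k q - q ^ (-c) • DKtinv k q)) := by
        rw [KKtc_succ', hcomm.eq, mul_smul_comm, mul_smul_comm, smul_comm]
    _ = KKtc k q (c - 1) (t + 1) + q ^ (-c) • (KKtc k q (c - 1) t * DKtinv k q) := by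
        rw [hfactor, smul_add, mul_add, smul_smul, mul_comm (q ^ (-c)),
          inv_mul_cancel_left₀ hd, mul_smul_comm (q ^ (-c))]
        rfl

lemma KKtc_mul_pow_reduction_one (hq0 : q ≠ 0) (hq : ∀ n : ℕ, 0 < n → q ^ n ≠ 1) (c : ℤ)
    {t j : ℕ} (hjt : j < t) :
    q ^ (-(t : ℤ)) • (KKtc k q c (t - j) * DKtinv k q ^ j) =
      q ^ (-(j : ℤ)) • (KKtc k q (c - 1) (t - j) * DKtinv k q ^ j +
        q ^ (-c) • (KKtc k q (c - 1) (t - (j + 1)) * DKtinv k q ^ (j + 1))) := by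
  obtain ⟨u, rfl⟩ : ∃ u, t = j + (u + 1) := ⟨t - (j + 1), by omega⟩
  rw [show j + (u + 1) - j = u + 1 by omega, show j + (u + 1) - (j + 1) = u by omega,
    show -((j + (u + 1) : ℕ) : ℤ) = -(j : ℤ) + -((u : ℤ) + 1) by push_cast; ring,
    zpow_add₀ hq0, mul_smul, ← smul_mul_assoc, KKtc_reduction_one hq0 hq, add_mul,
    smul_mul_assoc, mul_assoc, pow_succ']

theorem KKtc_reduction (hq0 : q ≠ 0) (hq : ∀ n : ℕ, 0 < n → q ^ n ≠ 1) (c : ℤ) {t p : ℕ}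
    (hpt : p ≤ t) :
    (q ^ (-((p : ℤ) * t))) • KKtc k q c t =
      ∑ j ∈ Finset.range (p + 1),
        (qbinom k q p j * q ^ (-(c * (j : ℤ)))) •
          (KKtc k q (c - (p : ℤ)) (t - j) * DKtinv k q ^ j) := by
  induction p with
  | zero => simp [qbinom_zero_right hq0 hq]
  | succ p ih =>
    have hterm : ∀ j ∈ Finset.range (p + 1), q ^ (-(t : ℤ)) •
        (qbinom k q p j * q ^ (-(c * (j : ℤ)))) • (KKtc k q (c - p) (t - j) * DKtinv k q ^ j) =
          (qbinom k q p j * q ^ (-(c * (j : ℤ))) * q ^ (-(j : ℤ))) •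
            (KKtc k q (c - (p + 1 : ℕ)) (t - j) * DKtinv k q ^ j) +
          (qbinom k q p j * q ^ (-(c * (j : ℤ))) * q ^ (-(j : ℤ)) * q ^ (-(c - p))) •
            (KKtc k q (c - (p + 1 : ℕ)) (t - (j + 1)) * DKtinv k q ^ (j + 1)) := by
      intro j hj
      rw [smul_comm, KKtc_mul_pow_reduction_one hq0 hq _ (by simp at hj; omega), smul_add,
        smul_add, smul_smul, smul_smul, smul_smul, Nat.cast_succ, sub_add_eq_sub_sub]
    rw [show -(((p + 1 : ℕ) : ℤ) * t) = -(t : ℤ) + -(p * t) by push_cast; ring, zpow_add₀ hq0,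
      mul_smul, ih (by omega), Finset.smul_sum, Finset.sum_congr rfl hterm,
      Finset.sum_range_succ_add_shift, Finset.sum_range_succ, Finset.sum_range_succ']
    congr 1
    congr 1
    · refine Finset.sum_congr rfl fun i hi => ?_
      have hexp : q ^ (-(c * i)) * q ^ (-(i : ℤ)) * q ^ (-(c - p)) =
          q ^ ((p : ℤ) - i) * q ^ (-(c * (i + 1))) := by
        simp only [← zpow_add₀ hq0]
        ring_nf
      rw [← add_smul, qbinom_succ_succ hq0 hq (Finset.mem_range.mp hi)]
      congr 1
      push_cast
      linear_combination (qbinom k q p i) * hexp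
    · simp [qbinom_zero_right hq0 hq]
    · have hexp :
          q ^ (-(c * p)) * q ^ (-(p : ℤ)) * q ^ (-(c - p)) = q ^ (-(c * (p + 1))) := by
        simp only [← zpow_add₀ hq0]
        ring_nf
      rw [qbinom_self hq0 hq, qbinom_self hq0 hq, one_mul, one_mul, hexp, Nat.cast_succ]

end

/-- for `c : ℤ` and `t p : ℕ` with `p ≤ t`,
`q^{−pt}·[K,K̃;c;t] = Σ_{j=0}^{p} [K,K̃;c−p;t−j]·[p choose j]_q·K̃^{−j}·q^{−cj}`;
in particular for `0 ≤ c ≤ t`,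
`[K,K̃;c;t] = Σ_{j=0}^{c} [K,K̃;t−j]·[c choose j]_q·K̃^{−j}·q^{c(t−j)}`. -/
theorem KKtc_reduction_Ktinv (k : Type) [Field k] (q : k)
    (hq0 : q ≠ 0) (hq : ∀ n : ℕ, 0 < n → q ^ n ≠ 1) :
    (∀ (c : ℤ) (t p : ℕ), p ≤ t →
        (q ^ (-((p : ℤ) * t))) • KKtc k q c t =
          ∑ j ∈ Finset.range (p + 1),
            (qbinom k q p j * q ^ (-(c * (j : ℤ)))) •
              (KKtc k q (c - (p : ℤ)) (t - j) * DKtinv k q ^ j)) ∧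
    (∀ c t : ℕ, c ≤ t →
        KKtc k q (c : ℤ) t =
          ∑ j ∈ Finset.range (c + 1),
            (qbinom k q c j * q ^ (c * (t - j))) •
              (KKtc k q 0 (t - j) * DKtinv k q ^ j)) := by
  refine ⟨fun c t p hpt => KKtc_reduction hq0 hq c hpt, fun c t hct => ?_⟩
  have hred := KKtc_reduction hq0 hq (c : ℤ) hct
  rw [sub_self] at hred
  calc KKtc k q c t = q ^ ((c : ℤ) * t) • q ^ (-((c : ℤ) * t)) • KKtc k q c t := by
        rw [smul_smul, ← zpow_add₀ hq0, add_neg_cancel, zpow_zero, one_smul]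
    _ = _ := by
        rw [hred, Finset.smul_sum]
        refine Finset.sum_congr rfl fun j hj => ?_
        have hexp : q ^ ((c : ℤ) * t) * q ^ (-((c : ℤ) * j)) = q ^ (c * (t - j)) := by
          rw [← zpow_add₀ hq0, ← zpow_natCast, Nat.cast_mul,
            Nat.cast_sub ((Finset.mem_range_succ_iff.mp hj).trans hct)]
          ring_nf
        rw [smul_smul, mul_left_comm, hexp]
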